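/- In any abstract argumentation framework, the grounded extension is a complete extension. -/

import Mathlib

/-!
Let `D ⊆ E` be the members of `E` that no member of `E` attacks. Whatever `D` defends lies in `D`:
it lies in `F(E) = E`, and if some `b ∈ E` attacked it, the defender `c ∈ D` attacking `b` would
in turn be attacked by a member of `E`, since `b ∈ E = F(E)`. So `D` is a prefixed point of `F`,
and the least fixpoint `E` lies below every prefixed point, hence `E = D` is conflict-free.
-/

/-- An argument `a` is defended by `S`: every attacker of `a` is attacked by some member of `S`. -/
def defends {A : Type*} (att : A → A → Prop) (S : Set A) (a : A) : Prop :=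
  ∀ b, att b a → ∃ c ∈ S, att c b

/-- The characteristic function `F`. -/
def Fop {A : Type*} (att : A → A → Prop) (S : Set A) : Set A := {a | defends att S a}

/-- A set of arguments is conflict-free. -/
def conflictFree {A : Type*} (att : A → A → Prop) (S : Set A) : Prop :=
  ∀ a ∈ S, ∀ b ∈ S, ¬ att a b

/-- A set of arguments is admissible. -/
def admissible {A : Type*} (att : A → A → Prop) (S : Set A) : Prop :=
  conflictFree att S ∧ ∀ a ∈ S, defends att S a

/-- A complete extension: conflict-free and equal to the set of arguments it defends. -/
def complete {A : Type*} (att : A → A → Prop) (E : Set A) : Prop :=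
  conflictFree att E ∧ Fop att E = E

theorem OrderHom.le_of_map_le_of_le_fixedPoints {α : Type*} [CompleteLattice α] (f : α →o α)
    {a b : α} (ha : ∀ x, f x = x → a ≤ x) (hb : f b ≤ b) : a ≤ b :=
  (ha _ f.map_lfp).trans (f.lfp_le hb)

section Argumentation

variable {A : Type*} (att : A → A → Prop)

theorem Fop_mono : Monotone (Fop att) := fun _ _ hST _ ha b hba =>
  let ⟨c, hc, hcb⟩ := ha b hba
  ⟨c, hST hc, hcb⟩

def FopHom : Set A →o Set A := ⟨Fop att, Fop_mono att⟩

def unattackedIn (E : Set A) : Set A := {a ∈ E | ∀ b ∈ E, ¬ att b a}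

variable {att}

theorem conflictFree_of_subset_unattackedIn {E : Set A} (h : E ⊆ unattackedIn att E) :
    conflictFree att E :=
  fun a ha _ hb hab => (h hb).2 a ha hab

theorem Fop_unattackedIn_subset {E : Set A} (hpost : E ⊆ Fop att E) (hpre : Fop att E ⊆ E) :
    Fop att (unattackedIn att E) ⊆ unattackedIn att E := by
  intro a ha
  refine ⟨hpre (Fop_mono att (fun _ hx => hx.1) ha), fun b hb hba => ?_⟩
  obtain ⟨c, hc, hcb⟩ := ha b hba
  obtain ⟨d, hd, hdc⟩ := hpost hb c hcb
  exact hc.2 d hd hdc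

end Argumentation

/-- The grounded extension is a complete extension. -/
theorem grounded_complete {A : Type*} (att : A → A → Prop) (E : Set A)
    (hfix : Fop att E = E) (hleast : ∀ S, Fop att S = S → E ⊆ S) :
    complete att E := by
  refine ⟨conflictFree_of_subset_unattackedIn ?_, hfix⟩
  exact (FopHom att).le_of_map_le_of_le_fixedPoints hleast
    (Fop_unattackedIn_subset hfix.ge hfix.le)
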